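/- Let G be a maximal outerplanar graph, G' its clique graph (vertices are triangles of G, adjacent iff they share a vertex). Then ρ(G) ≥ ρ(G'): for any packing Z of G', there exists a packing of G of size |Z|. -/

import Mathlib

open SimpleGraph Finset

/-- `X` is a dominating set of `G`: every vertex is in `X` or adjacent to a vertex of `X`. -/
def IsDominatingSet {V : Type*} (G : SimpleGraph V) (X : Finset V) : Prop :=
  ∀ v : V, v ∈ X ∨ ∃ u ∈ X, G.Adj u v

/-- The domination number of `G`. -/
noncomputable def domNum {V : Type*} (G : SimpleGraph V) : ℕ :=
  sInf {n : ℕ | ∃ X : Finset V, IsDominatingSet G X ∧ X.card = n}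

/-- `Y` is a packing of `G`: closed neighborhoods of distinct vertices of `Y` are disjoint
(equivalently, distinct vertices of `Y` are at distance at least 3). -/
def IsPackingSet {V : Type*} (G : SimpleGraph V) (Y : Finset V) : Prop :=
  ∀ u ∈ Y, ∀ v ∈ Y, u ≠ v →
    Disjoint (insert u (G.neighborSet u)) (insert v (G.neighborSet v))

/-- The packing number of `G`. -/
noncomputable def packNum {V : Type*} (G : SimpleGraph V) : ℕ :=
  sSup {n : ℕ | ∃ Y : Finset V, IsPackingSet G Y ∧ Y.card = n}

/-- `G` is a maximal outerplanar graph: its vertices can be arranged in a Hamiltonian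
cycle (the boundary of the polygon), all chords are pairwise non-crossing, and the number
of edges is `2n - 3` (a full triangulation of the polygon). -/
def IsMaximalOuterplanar {V : Type*} [Fintype V] (G : SimpleGraph V) : Prop :=
  ∃ f : Fin (Fintype.card V) ≃ V,
    (∀ i : Fin (Fintype.card V), G.Adj (f i) (f (finRotate (Fintype.card V) i))) ∧
    (∀ i j k l : Fin (Fintype.card V), G.Adj (f i) (f j) → G.Adj (f k) (f l) →
      ¬ (i < k ∧ k < j ∧ j < l)) ∧
    G.edgeSet.ncard = 2 * Fintype.card V - 3

/-- The clique graph of `G`: vertices are the triangles of `G`, two triangles being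
adjacent iff they are distinct and share a vertex. -/
def cliqueGraph {V : Type*} [DecidableEq V] (G : SimpleGraph V) :
    SimpleGraph {t : Finset V // G.IsNClique 3 t} :=
  SimpleGraph.fromRel (fun s t => (s.1 ∩ t.1).Nonempty)

/-!
Number the vertices `0, …, n - 1` by the outerplanar labelling. A noncrossing set of chords of
the polygon `i, …, j` (sides included) has at most `2 (j - i) - 1` members, with equality only
for a triangulation; so `2n - 3` edges force every edge of `G` into a triangle, and two triangles
of a packing of `G'` are then vertex-disjoint with no edge between them. For such triangles
`a < b < c` and `a' < b' < c'` the chords `ac` and `a'c'` are disjoint or nested, and every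
neighbour of a middle vertex lies between the ends of its triangle's outer chord. Hence the middle
vertices of the packed triangles are pairwise at distance at least 3.
-/

namespace Chords

structure IsNoncrossing (E : Finset (ℕ × ℕ)) : Prop where
  fst_lt_snd : ∀ p ∈ E, p.1 < p.2
  not_cross : ∀ p ∈ E, ∀ q ∈ E, ¬(p.1 < q.1 ∧ q.1 < p.2 ∧ p.2 < q.2)

def within (E : Finset (ℕ × ℕ)) (i j : ℕ) : Finset (ℕ × ℕ) :=
  E.filter fun p => i ≤ p.1 ∧ p.2 ≤ j

/-- The chords of `E` triangulate the polygon `i, i + 1, …, j` (sides included): by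
`card_within_le` they are as many as possible. -/
def Triangulates (E : Finset (ℕ × ℕ)) (i j : ℕ) : Prop :=
  #(within E i j) = 2 * (j - i) - 1

variable {E : Finset (ℕ × ℕ)}

lemma within_succ_subset (hE : IsNoncrossing E) (i : ℕ) :
    within E i (i + 1) ⊆ {(i, i + 1)} := by
  rintro ⟨x, y⟩ hp
  simp only [within, mem_filter] at hp
  have := hE.fst_lt_snd _ hp.1
  simp only [mem_singleton, Prod.mk.injEq]
  omega

lemma exists_last_chord_from {i j : ℕ} (h : i + 1 < j) :
    ∃ k, i < k ∧ k < j ∧ (k = i + 1 ∨ (i, k) ∈ E) ∧ ∀ y, (i, y) ∈ E → y < j → y ≤ k := by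
  set T := (Ioo i j).filter fun y => y = i + 1 ∨ (i, y) ∈ E
  have hT : i + 1 ∈ T := mem_filter.mpr ⟨mem_Ioo.mpr ⟨by omega, h⟩, Or.inl rfl⟩
  obtain ⟨hk, hkE⟩ := mem_filter.mp (T.max'_mem ⟨_, hT⟩)
  refine ⟨T.max' ⟨_, hT⟩, (mem_Ioo.mp hk).1, (mem_Ioo.mp hk).2, hkE, fun y hy hyj => ?_⟩
  rcases le_or_gt y i with hyi | hyi
  · exact hyi.trans (mem_Ioo.mp hk).1.le
  · exact T.le_max' y (mem_filter.mpr ⟨mem_Ioo.mpr ⟨hyi, hyj⟩, Or.inr hy⟩)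

lemma within_subset_insert_union (hE : IsNoncrossing E) {i j k : ℕ} (hik : i < k)
    (hk : k = i + 1 ∨ (i, k) ∈ E) (hmax : ∀ y, (i, y) ∈ E → y < j → y ≤ k) :
    within E i j ⊆ insert (i, j) (within E i k ∪ within E k j) := by
  rintro ⟨x, y⟩ hq
  simp only [within, mem_filter, mem_insert, mem_union, Prod.mk.injEq] at hq ⊢
  obtain ⟨hq, hix, hyj⟩ := hq
  have hxy := hE.fst_lt_snd _ hq
  by_cases hyk : y ≤ k
  · exact Or.inr (Or.inl ⟨hq, hix, hyk⟩)
  by_cases hkx : k ≤ x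
  · exact Or.inr (Or.inr ⟨hq, hkx, hyj⟩)
  rcases hix.eq_or_lt with rfl | hix
  · rcases hyj.eq_or_lt with rfl | hyj
    · exact Or.inl ⟨rfl, rfl⟩
    · exact absurd (hmax y hq hyj) hyk
  · rcases hk with rfl | hk
    · omega
    · exact absurd (hE.not_cross _ hk _ hq) (by simp only; omega)

lemma disjoint_within (hE : IsNoncrossing E) (i j k : ℕ) :
    Disjoint (within E i k) (within E k j) := by
  refine disjoint_left.mpr fun p hp hp' => ?_
  simp only [within, mem_filter] at hp hp'
  have := hE.fst_lt_snd _ hp.1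
  omega

lemma exists_card_within_le (hE : IsNoncrossing E) {i j : ℕ} (h : i + 1 < j) :
    ∃ k, i < k ∧ k < j ∧ #(within E i j) ≤ #(within E i k) + #(within E k j) + 1 ∧
      ((i, j) ∉ E → #(within E i j) ≤ #(within E i k) + #(within E k j)) := by
  obtain ⟨k, hik, hkj, hk, hmax⟩ := exists_last_chord_from (E := E) h
  have hsub := within_subset_insert_union hE hik hk hmax
  have hunion := card_union_of_disjoint (disjoint_within hE i j k)
  refine ⟨k, hik, hkj, ?_, fun hij => ?_⟩
  · calc #(within E i j) ≤ #(insert (i, j) (within E i k ∪ within E k j)) := card_le_card hsub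
      _ ≤ _ := by rw [← hunion]; exact card_insert_le _ _
  · have hij' : (i, j) ∉ within E i j := fun h => hij (mem_filter.mp h).1
    rw [← hunion]
    exact card_le_card ((subset_insert_iff_of_notMem hij').mp hsub)

theorem card_within_le (hE : IsNoncrossing E) {i j : ℕ} (h : i < j) :
    #(within E i j) ≤ 2 * (j - i) - 1 := by
  obtain rfl | h : j = i + 1 ∨ i + 1 < j := by omega
  · simpa using card_le_card (within_succ_subset hE i)
  · obtain ⟨k, hik, hkj, hcard, -⟩ := exists_card_within_le hE h
    have hle₁ := card_within_le hE hik
    have hle₂ := card_within_le hE hkj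
    omega
termination_by j - i

lemma Triangulates.mem (hE : IsNoncrossing E) {i j : ℕ} (h : i < j) (hT : Triangulates E i j) :
    (i, j) ∈ E := by
  obtain rfl | h : j = i + 1 ∨ i + 1 < j := by omega
  · have hsub := within_succ_subset hE i
    have hT : #(within E i (i + 1)) = #{(i, i + 1)} := by simpa [Triangulates] using hT
    have hmem : (i, i + 1) ∈ within E i (i + 1) :=
      (eq_of_subset_of_card_le hsub hT.ge).symm ▸ mem_singleton_self _
    exact (mem_filter.mp hmem).1
  · by_contra hij
    obtain ⟨k, hik, hkj, -, hcard⟩ := exists_card_within_le hE h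
    have hle := hcard hij
    have hle₁ := card_within_le hE hik
    have hle₂ := card_within_le hE hkj
    unfold Triangulates at hT
    omega

lemma Triangulates.split (hE : IsNoncrossing E) {i j : ℕ} (h : i + 1 < j)
    (hT : Triangulates E i j) :
    ∃ k, i < k ∧ k < j ∧ Triangulates E i k ∧ Triangulates E k j := by
  obtain ⟨k, hik, hkj, hcard, -⟩ := exists_card_within_le hE h
  have hle₁ := card_within_le hE hik
  have hle₂ := card_within_le hE hkj
  unfold Triangulates at hT ⊢
  exact ⟨k, hik, hkj, by omega, by omega⟩

theorem Triangulates.exists_triangle (hE : IsNoncrossing E) {i j : ℕ} (h : i + 1 < j)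
    (hT : Triangulates E i j) {x y : ℕ} (hxy : (x, y) ∈ within E i j) :
    ∃ z, ((x, z) ∈ E ∨ (z, x) ∈ E) ∧ ((y, z) ∈ E ∨ (z, y) ∈ E) := by
  obtain ⟨k, hik, hkj, hTik, hTkj⟩ := hT.split hE h
  have hij := hT.mem hE (by omega)
  have hikE := hTik.mem hE hik
  have hkjE := hTkj.mem hE hkj
  simp only [within, mem_filter] at hxy
  obtain ⟨hxy, hix, hyj⟩ := hxy
  have hlt := hE.fst_lt_snd _ hxy
  by_cases hyk : y ≤ k
  · by_cases hik' : i + 1 < k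
    · exact hTik.exists_triangle hE hik' (mem_filter.mpr ⟨hxy, hix, hyk⟩)
    · obtain ⟨rfl, rfl⟩ : x = i ∧ y = k := by simp only at hlt; omega
      exact ⟨j, Or.inl hij, Or.inl hkjE⟩
  by_cases hkx : k ≤ x
  · by_cases hkj' : k + 1 < j
    · exact hTkj.exists_triangle hE hkj' (mem_filter.mpr ⟨hxy, hkx, hyj⟩)
    · obtain ⟨rfl, rfl⟩ : x = k ∧ y = j := by simp only at hlt; omega
      exact ⟨i, Or.inr hikE, Or.inr hij⟩
  rcases hix.eq_or_lt with rfl | hix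
  · rcases hyj.eq_or_lt with rfl | hyj
    · exact ⟨k, Or.inl hikE, Or.inr hkjE⟩
    · exact (hE.not_cross _ hxy _ hkjE ⟨by omega, by omega, hyj⟩).elim
  · exact (hE.not_cross _ hikE _ hxy ⟨hix, by omega, by omega⟩).elim
termination_by j - i

end Chords

namespace SimpleGraph

variable {V : Type*}

/-- No two edges of `G` cross when its vertices are placed on a circle in the order `ι`. -/
def IsNoncrossing (G : SimpleGraph V) {α : Type*} [LT α] (ι : V → α) : Prop :=
  ∀ a b c d, G.Adj a b → G.Adj c d → ¬(ι a < ι c ∧ ι c < ι b ∧ ι b < ι d)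

def chords (G : SimpleGraph V) [Fintype G.edgeSet] (g : V → ℕ) : Finset (ℕ × ℕ) :=
  G.edgeFinset.image fun e => ((e.map g).inf, (e.map g).sup)

section

variable {G : SimpleGraph V} [Fintype G.edgeSet] {g : V → ℕ}

lemma mem_chords (hg : Function.Injective g) {x y : ℕ} :
    (x, y) ∈ G.chords g ↔ x < y ∧ ∃ u v, G.Adj u v ∧ g u = x ∧ g v = y := by
  constructor
  · intro hxy
    obtain ⟨e, he, hexy⟩ := mem_image.mp hxy
    induction e using Sym2.ind with | _ u v
    have huv : G.Adj u v := mem_edgeFinset.mp he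
    simp only [Sym2.map_mk, Sym2.inf_mk, Sym2.sup_mk, Prod.mk.injEq] at hexy
    obtain ⟨rfl, rfl⟩ := hexy
    rcases lt_or_gt_of_ne (hg.ne huv.ne) with h | h
    · exact ⟨by simp [h, h.le], u, v, huv, by simp [h.le], by simp [h.le]⟩
    · exact ⟨by simp [h, h.le], v, u, huv.symm, by simp [h.le], by simp [h.le]⟩
  · rintro ⟨hxy, u, v, huv, rfl, rfl⟩
    exact mem_image.mpr ⟨s(u, v), mem_edgeFinset.mpr huv, by simp [hxy.le]⟩

lemma card_chords (hg : Function.Injective g) : #(G.chords g) = #G.edgeFinset :=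
  card_image_of_injective _ fun _ _ h =>
    Sym2.map.injective hg (Sym2.inf_eq_inf_and_sup_eq_sup.mp (Prod.mk.inj h))

lemma IsNoncrossing.isNoncrossing_chords (hg : Function.Injective g)
    (hnc : G.IsNoncrossing g) :
    Chords.IsNoncrossing (G.chords g) where
  fst_lt_snd p hp := ((mem_chords hg).mp hp).1
  not_cross p hp q hq := by
    obtain ⟨-, a, b, hab, ha, hb⟩ := (mem_chords hg).mp hp
    obtain ⟨-, c, d, hcd, hc, hd⟩ := (mem_chords hg).mp hq
    rw [← ha, ← hb, ← hc, ← hd]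
    exact hnc a b c d hab hcd

lemma exists_adj_of_mem_chords (hg : Function.Injective g) {u : V} {z : ℕ}
    (h : (g u, z) ∈ G.chords g ∨ (z, g u) ∈ G.chords g) : ∃ w, g w = z ∧ G.Adj u w := by
  rcases h with h | h
  · obtain ⟨-, u', w, hadj, hu, rfl⟩ := (mem_chords hg).mp h
    exact ⟨w, rfl, hg hu ▸ hadj⟩
  · obtain ⟨-, w, u', hadj, rfl, hu⟩ := (mem_chords hg).mp h
    exact ⟨w, rfl, hg hu ▸ hadj.symm⟩

end

theorem IsNoncrossing.exists_adj_adj [Fintype V] {G : SimpleGraph V} {n : ℕ} {ι : V → Fin n}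
    (hι : Function.Injective ι) (hn : 3 ≤ n) (hnc : G.IsNoncrossing ι)
    (hcard : G.edgeSet.ncard = 2 * n - 3) {u v : V} (huv : G.Adj u v) : ∃ w, G.Adj u w ∧ G.Adj v w := by
  classical
  set g : V → ℕ := fun v => ι v
  have hg : Function.Injective g := Fin.val_injective.comp hι
  have hE : Chords.IsNoncrossing (G.chords g) := hnc.isNoncrossing_chords hg
  have hwithin : Chords.within (G.chords g) 0 (n - 1) = G.chords g :=
    filter_true_of_mem fun ⟨x, y⟩ hp => by
      obtain ⟨-, -, b, -, -, rfl⟩ := (mem_chords hg).mp hp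
      exact ⟨Nat.zero_le x, Nat.le_sub_one_of_lt (ι b).isLt⟩
  have hT : Chords.Triangulates (G.chords g) 0 (n - 1) := by
    rw [Chords.Triangulates, hwithin, card_chords hg, ← Set.ncard_coe_finset, coe_edgeFinset,
      hcard]
    omega
  wlog h : g u < g v generalizing u v
  · obtain ⟨w, hvw, huw⟩ := this huv.symm (lt_of_le_of_ne (not_lt.mp h) (hg.ne huv.ne.symm))
    exact ⟨w, huw, hvw⟩
  have hmem : (g u, g v) ∈ Chords.within (G.chords g) 0 (n - 1) := by
    rw [hwithin]
    exact (mem_chords hg).mpr ⟨h, u, v, huv, rfl, rfl⟩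
  obtain ⟨z, hz₁, hz₂⟩ := hT.exists_triangle hE (by omega) hmem
  obtain ⟨w, rfl, huw⟩ := exists_adj_of_mem_chords hg hz₁
  obtain ⟨w', hw', hvw'⟩ := exists_adj_of_mem_chords hg hz₂
  exact ⟨w, huw, hg hw' ▸ hvw'⟩

end SimpleGraph

lemma Finset.exists_lt_lt_of_card_eq_three {V α : Type*} [DecidableEq V] [LinearOrder α]
    {ι : V → α} (hι : Function.Injective ι) {s : Finset V} (hs : #s = 3) :
    ∃ a ∈ s, ∃ b ∈ s, ∃ c ∈ s, ι a < ι b ∧ ι b < ι c := by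
  obtain ⟨x, y, z, hxy, hxz, hyz, rfl⟩ := card_eq_three.mp hs
  have := hι.ne hxy
  have := hι.ne hxz
  have := hι.ne hyz
  simp only [mem_insert, mem_singleton, exists_eq_or_imp, exists_eq_left]
  grind

namespace SimpleGraph.IsNoncrossing

variable {V α : Type*} [LinearOrder α] {G : SimpleGraph V} {ι : V → α}

lemma mem_Icc_of_mem_closedNbhd (hnc : G.IsNoncrossing ι) {a b c p : V} (hac : G.Adj a c)
    (hab : ι a < ι b) (hbc : ι b < ι c) (hp : p ∈ insert b (G.neighborSet b)) :
    ι p ∈ Set.Icc (ι a) (ι c) := by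
  rcases hp with rfl | hbp
  · exact ⟨hab.le, hbc.le⟩
  · exact ⟨not_lt.mp fun hpa => hnc p b a c hbp.symm hac ⟨hpa, hab, hbc⟩,
      not_lt.mp fun hcp => hnc a c b p hac hbp ⟨hab, hbc, hcp⟩⟩

lemma notMem_Icc_of_mem_closedNbhd (hι : Function.Injective ι) (hnc : G.IsNoncrossing ι)
    {a c x p : V} (hac : G.Adj a c) (hx : ι x ∉ Set.Icc (ι a) (ι c)) (hxa : ¬G.Adj x a)
    (hxc : ¬G.Adj x c) (hp : p ∈ insert x (G.neighborSet x)) : ι p ∉ Set.Icc (ι a) (ι c) := by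
  rcases hp with rfl | hxp
  · exact hx
  rintro ⟨hap, hpc⟩
  rcases hap.eq_or_lt with hap | hap
  · exact hxa (hι hap ▸ hxp)
  rcases hpc.eq_or_lt with hpc | hpc
  · exact hxc (hι hpc ▸ hxp)
  simp only [Set.mem_Icc, not_and_or, not_le] at hx
  rcases hx with hxa' | hcx
  · exact hnc x p a c hxp hac ⟨hxa', hap, hpc⟩
  · exact hnc a c p x hac hxp.symm ⟨hap, hpc, hcx⟩

/-- The chords `ac` and `a'c'` are disjoint or, up to symmetry, `a'c'` is nested in `ac`. The
closed neighbourhood of a middle vertex stays between the ends of its own outer chord; in the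
nested case `b` lies outside `a'c'`, and then so does its whole closed neighbourhood. -/
theorem disjoint_closedNbhd (hι : Function.Injective ι) (hnc : G.IsNoncrossing ι)
    {s t : Finset V} (hs : G.IsClique (s : Set V)) (ht : G.IsClique (t : Set V))
    (hst : ∀ x ∈ s, ∀ y ∈ t, x ≠ y ∧ ¬G.Adj x y) {a b c a' b' c' : V}
    (ha : a ∈ s) (hb : b ∈ s) (hc : c ∈ s) (ha' : a' ∈ t) (hb' : b' ∈ t) (hc' : c' ∈ t)
    (hab : ι a < ι b) (hbc : ι b < ι c) (hab' : ι a' < ι b') (hbc' : ι b' < ι c') :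
    Disjoint (insert b (G.neighborSet b)) (insert b' (G.neighborSet b')) := by
  wlog haa' : ι a < ι a' generalizing s t a b c a' b' c'
  · refine (this ht hs (fun y hy x hx => ?_) ha' hb' hc' ha hb hc hab' hbc' hab hbc
      (lt_of_le_of_ne (not_lt.mp haa') (hι.ne (hst a ha a' ha').1).symm)).symm
    exact ⟨(hst x hx y hy).1.symm, fun h => (hst x hx y hy).2 h.symm⟩
  have hac : G.Adj a c := hs ha hc (ne_of_apply_ne ι (hab.trans hbc).ne)
  have hac' : G.Adj a' c' := ht ha' hc' (ne_of_apply_ne ι (hab'.trans hbc').ne)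
  rw [Set.disjoint_left]
  intro p hp hp'
  have hpac := hnc.mem_Icc_of_mem_closedNbhd hac hab hbc hp
  have hpac' := hnc.mem_Icc_of_mem_closedNbhd hac' hab' hbc' hp'
  rcases lt_or_gt_of_ne (hι.ne (hst c hc a' ha').1) with hca' | ha'c
  · exact not_le.mpr (hpac.2.trans_lt hca') hpac'.1
  have hc'c : ι c' < ι c :=
    lt_of_le_of_ne (not_lt.mp fun h => hnc a c a' c' hac hac' ⟨haa', ha'c, h⟩)
      (hι.ne (hst c hc c' hc').1).symm
  have hbout : ι b ∉ Set.Icc (ι a') (ι c') := by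
    rintro ⟨h₁, h₂⟩
    have hab_adj : G.Adj a b := hs ha hb (ne_of_apply_ne ι hab.ne)
    exact hnc a b a' c' hab_adj hac' ⟨haa', lt_of_le_of_ne h₁ (hι.ne (hst b hb a' ha').1).symm,
      lt_of_le_of_ne h₂ (hι.ne (hst b hb c' hc').1)⟩
  exact hnc.notMem_Icc_of_mem_closedNbhd hι hac' hbout (hst b hb a' ha').2 (hst b hb c' hc').2
    hp hpac'

end SimpleGraph.IsNoncrossing

namespace IsPackingSet

variable {V : Type*} [DecidableEq V] {G : SimpleGraph V}
  {Z : Finset {t : Finset V // G.IsNClique 3 t}} {s t : {t : Finset V // G.IsNClique 3 t}}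

lemma cliqueGraph_eq_of_inter_nonempty (hZ : IsPackingSet (cliqueGraph G) Z) (hs : s ∈ Z)
    (ht : t ∈ Z) (r : {t : Finset V // G.IsNClique 3 t}) (hrs : (r.1 ∩ s.1).Nonempty)
    (hrt : (r.1 ∩ t.1).Nonempty) : s = t := by
  by_contra hst
  have hmem : ∀ u : {t : Finset V // G.IsNClique 3 t}, (r.1 ∩ u.1).Nonempty →
      r ∈ insert u ((cliqueGraph G).neighborSet u) := fun u hu => by
    by_cases h : r = u
    · exact Or.inl h
    · exact Or.inr (show (cliqueGraph G).Adj u r from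
        (SimpleGraph.fromRel_adj _ _ _).mpr ⟨Ne.symm h, Or.inr hu⟩)
  exact Set.disjoint_left.mp (hZ s hs t ht hst) (hmem s hrs) (hmem t hrt)

lemma ne_and_not_adj_of_cliqueGraph (htri : ∀ u v, G.Adj u v → ∃ w, G.Adj u w ∧ G.Adj v w)
    (hZ : IsPackingSet (cliqueGraph G) Z) (hs : s ∈ Z) (ht : t ∈ Z) (hst : s ≠ t) :
    ∀ x ∈ s.1, ∀ y ∈ t.1, x ≠ y ∧ ¬G.Adj x y := by
  intro x hx y hy
  refine ⟨fun hxy => hst (hZ.cliqueGraph_eq_of_inter_nonempty hs ht s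
    ⟨x, mem_inter.mpr ⟨hx, hx⟩⟩ ⟨x, mem_inter.mpr ⟨hx, hxy ▸ hy⟩⟩), fun hxy => ?_⟩
  obtain ⟨w, hxw, hyw⟩ := htri x y hxy
  exact hst (hZ.cliqueGraph_eq_of_inter_nonempty hs ht
    ⟨{x, y, w}, SimpleGraph.is3Clique_triple_iff.mpr ⟨hxy, hxw, hyw⟩⟩
    ⟨x, by simp [hx]⟩ ⟨y, by simp [hy]⟩)

theorem exists_of_cliqueGraph {α : Type*} [LinearOrder α] {ι : V → α}
    (hι : Function.Injective ι) (hnc : G.IsNoncrossing ι)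
    (htri : ∀ u v, G.Adj u v → ∃ w, G.Adj u w ∧ G.Adj v w)
    (hZ : IsPackingSet (cliqueGraph G) Z) : ∃ Y : Finset V, IsPackingSet G Y ∧ #Y = #Z := by
  choose a ha b hb c hc hab hbc using
    fun s : {t : Finset V // G.IsNClique 3 t} => exists_lt_lt_of_card_eq_three hι s.2.card_eq
  have hdisj : ∀ s ∈ Z, ∀ t ∈ Z, s ≠ t →
      Disjoint (insert (b s) (G.neighborSet (b s))) (insert (b t) (G.neighborSet (b t))) :=
    fun s hs t ht hst => hnc.disjoint_closedNbhd hι s.2.isClique t.2.isClique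
      (hZ.ne_and_not_adj_of_cliqueGraph htri hs ht hst) (ha s) (hb s) (hc s) (ha t) (hb t) (hc t)
      (hab s) (hbc s) (hab t) (hbc t)
  have hinj : Set.InjOn b Z := fun s hs t ht hbst => by_contra fun hst =>
    Set.disjoint_left.mp (hdisj s hs t ht hst) (Set.mem_insert _ _) (hbst ▸ Set.mem_insert _ _)
  refine ⟨Z.image b, ?_, card_image_of_injOn hinj⟩
  intro u hu v hv huv
  obtain ⟨s, hs, rfl⟩ := mem_image.mp hu
  obtain ⟨t, ht, rfl⟩ := mem_image.mp hv
  exact hdisj s hs t ht fun h => huv (h ▸ rfl)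

end IsPackingSet

lemma packNum_le_packNum {V W : Type*} [Fintype V] {G : SimpleGraph V} {H : SimpleGraph W}
    (h : ∀ Z, IsPackingSet H Z → ∃ Y, IsPackingSet G Y ∧ #Y = #Z) : packNum H ≤ packNum G := by
  refine csSup_le_csSup ⟨Fintype.card V, ?_⟩
    ⟨0, ∅, fun _ hu => absurd hu (notMem_empty _), rfl⟩ ?_
  · rintro m ⟨Y, -, rfl⟩
    exact card_le_univ Y
  · rintro m ⟨Z, hZ, rfl⟩
    exact h Z hZ

theorem mop_cliqueGraph_packing {V : Type*} [Fintype V] [DecidableEq V]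
    (G : SimpleGraph V) (hmop : IsMaximalOuterplanar G) (hn : 3 ≤ Fintype.card V) :
    (∀ Z : Finset {t : Finset V // G.IsNClique 3 t}, IsPackingSet (cliqueGraph G) Z →
        ∃ Y : Finset V, IsPackingSet G Y ∧ Y.card = Z.card) ∧
      packNum (cliqueGraph G) ≤ packNum G := by
  obtain ⟨f, -, hcross, hcard⟩ := hmop
  have hnc : G.IsNoncrossing f.symm := fun a b c d hab hcd => by
    simpa using hcross (f.symm a) (f.symm b) (f.symm c) (f.symm d) (by simpa using hab)
      (by simpa using hcd)
  have htri : ∀ u v, G.Adj u v → ∃ w, G.Adj u w ∧ G.Adj v w := fun _ _ huv =>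
    hnc.exists_adj_adj f.symm.injective hn hcard huv
  have hpack := fun Z (hZ : IsPackingSet (cliqueGraph G) Z) =>
    hZ.exists_of_cliqueGraph f.symm.injective hnc htri
  exact ⟨hpack, packNum_le_packNum hpack⟩
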